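/- arXiv:2512.12886 — 3 statements merged into one kernel-verified Lean document; each statement's English description precedes it below -/
import Mathlib

section
/- Let k be a field and let m = x_{i_1}⋯x_{i_t} be a squarefree monomial in k[x_1,…,x_n] that is a product of a nonempty set of distinct variables. Then the principal ideal ⟨m⟩ is geometrically vertex decomposable. -/
open scoped Classical

section GVDDefs

/-- The squarefree monomial whose support is the finite set `s`. -/
noncomputable def sqMono (k : Type) [Field k] {σ : Type} (s : Finset σ) : MvPolynomial σ k :=
  ∏ i ∈ s, MvPolynomial.X i

/-- The squarefree monomial ideal generated by the monomials with supports in `F`. -/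
noncomputable def sqSpan (k : Type) [Field k] {σ : Type} (F : Set (Finset σ)) :
    Ideal (MvPolynomial σ k) :=
  Ideal.span {m | ∃ s ∈ F, m = sqMono k s}

/-- The height of a prime ideal. -/
noncomputable def primeHt {R : Type*} [CommRing R] (P : Ideal R) (hP : P.IsPrime) : ℕ∞ :=
  Order.height (⟨P, hP⟩ : PrimeSpectrum R)

/-- An ideal is unmixed if all of its minimal primes have the same height. -/
def UnmixedIdeal {R : Type*} [CommRing R] (I : Ideal R) : Prop :=
  ∀ P Q : Ideal R, ∀ hP : P ∈ I.minimalPrimes, ∀ hQ : Q ∈ I.minimalPrimes,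
    primeHt P hP.1.1 = primeHt Q hQ.1.1

/-- View a finset of `σ` as a finset of `{x : σ // x ≠ y}` (dropping `y`). -/
noncomputable def dropVar {σ : Type} (y : σ) (s : Finset σ) : Finset {x : σ // x ≠ y} :=
  s.subtype (· ≠ y)

/-- Supports of the generators of `N_{y,I}`: the given generators not divisible by `y`. -/
def NFam {σ : Type} (y : σ) (F : Set (Finset σ)) : Set (Finset σ) := {s ∈ F | y ∉ s}

/-- Supports of the generators of `C_{y,I}`: the given generators with `y` divided out
(together with the generators not divisible by `y`). -/
noncomputable def CFam {σ : Type} (y : σ) (F : Set (Finset σ)) : Set (Finset σ) :=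
  (fun s => s.erase y) '' F

/-- A squarefree monomial ideal `I` is geometrically vertex decomposable if it is unmixed
and either (1) `I = ⟨1⟩` or `I` is generated by a subset of the variables, or (2) there is
a set of squarefree monomial generators of `I` and a variable `y` such that
`I = C_{y,I} ∩ (N_{y,I} + ⟨y⟩)` and both `C_{y,I}` and `N_{y,I}` are geometrically vertex
decomposable in the polynomial ring omitting the variable `y`. -/
inductive IsGVD (k : Type) [Field k] : (σ : Type) → Ideal (MvPolynomial σ k) → Prop where
  | base (σ : Type) (I : Ideal (MvPolynomial σ k)) (hunm : UnmixedIdeal I)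
      (h : I = ⊤ ∨ ∃ W : Set σ, I = Ideal.span (MvPolynomial.X '' W)) : IsGVD k σ I
  | step (σ : Type) (I : Ideal (MvPolynomial σ k)) (hunm : UnmixedIdeal I)
      (F : Set (Finset σ)) (hgen : I = sqSpan k F) (y : σ)
      (hdec : I = sqSpan k (CFam y F) ⊓ (sqSpan k (NFam y F) ⊔ Ideal.span {MvPolynomial.X y}))
      (hC : IsGVD k {x : σ // x ≠ y} (sqSpan k (dropVar y '' CFam y F)))
      (hN : IsGVD k {x : σ // x ≠ y} (sqSpan k (dropVar y '' NFam y F))) :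
      IsGVD k σ I

end GVDDefs

/-!
Splitting off one variable `y ∈ s`, the ideal `⟨x^s⟩` decomposes as
`⟨x^(s \ y)⟩ ∩ ⟨y⟩`, with `N = 0` and `C = ⟨x^(s \ y)⟩` again principal on one variable fewer,
so induction on `#s` reduces everything to `⟨1⟩`. Unmixedness holds because the minimal primes
of `⟨x^s⟩` are the ideals `⟨x_i⟩`, `i ∈ s`, which a permutation of the variables carries
onto each other.
-/

lemma Ideal.span_singleton_inf_span_singleton_of_prime {R : Type*} [CommRing R] {a p : R}
    (hp : Prime p) (hpa : ¬ p ∣ a) :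
    Ideal.span {a} ⊓ Ideal.span {p} = Ideal.span {a * p} := by
  refine le_antisymm (fun x hx => ?_) (le_inf ?_ ?_)
  · obtain ⟨⟨c, rfl⟩, hpx⟩ := And.imp Ideal.mem_span_singleton.mp Ideal.mem_span_singleton.mp
      (Submodule.mem_inf.mp hx)
    obtain ⟨d, rfl⟩ := (hp.dvd_mul.mp hpx).resolve_left hpa
    exact Ideal.mem_span_singleton.mpr ⟨d, by ring⟩
  · exact Ideal.span_singleton_le_span_singleton.mpr (dvd_mul_right a p)
  · exact Ideal.span_singleton_le_span_singleton.mpr (dvd_mul_left p a)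

lemma primeHt_eq_height {R : Type*} [CommRing R] (P : Ideal R) (hP : P.IsPrime) :
    primeHt P hP = P.height :=
  (PrimeSpectrum.height_eq_orderHeight ⟨P, hP⟩).symm

lemma UnmixedIdeal.of_isPrime {R : Type*} [CommRing R] {I : Ideal R} (hI : I.IsPrime) :
    UnmixedIdeal I := by
  intro P Q hP hQ
  rw [Ideal.minimalPrimes_eq_subsingleton_self, Set.mem_singleton_iff] at hP hQ
  subst hP hQ
  rfl

lemma NFam_singleton_of_mem {σ : Type} {s : Finset σ} {y : σ} (hy : y ∈ s) : NFam y {s} = ∅ :=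
  Set.eq_empty_of_forall_notMem fun _ ⟨ht, hyt⟩ => hyt (Set.mem_singleton_iff.mp ht ▸ hy)

lemma CFam_singleton {σ : Type} (s : Finset σ) (y : σ) : CFam y {s} = {s.erase y} :=
  Set.image_singleton

lemma card_dropVar_of_notMem {σ : Type} {s : Finset σ} {y : σ} (hy : y ∉ s) :
    (dropVar y s).card = s.card := by
  rw [dropVar, Finset.card_subtype, Finset.filter_true_of_mem]
  rintro x hx rfl
  exact hy hx

section SquarefreeMonomial

variable (k : Type) [Field k] {σ : Type}

lemma sqMono_empty : sqMono k (∅ : Finset σ) = 1 :=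
  Finset.prod_empty

lemma sqMono_erase_mul_X {s : Finset σ} {y : σ} (hy : y ∈ s) :
    sqMono k (s.erase y) * MvPolynomial.X y = sqMono k s :=
  Finset.prod_erase_mul s _ hy

lemma X_not_dvd_sqMono {s : Finset σ} {y : σ} (hy : y ∉ s) :
    ¬ (MvPolynomial.X y : MvPolynomial σ k) ∣ sqMono k s := by
  rw [sqMono, MvPolynomial.X_prime.dvd_finsetProd_iff]
  rintro ⟨i, hi, hdvd⟩
  rw [MvPolynomial.X_dvd_X] at hdvd
  exact hy (hdvd ▸ hi)

lemma span_sqMono_eq_inf {s : Finset σ} {y : σ} (hy : y ∈ s) :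
    Ideal.span {sqMono k s} =
      Ideal.span {sqMono k (s.erase y)} ⊓ Ideal.span {(MvPolynomial.X y : MvPolynomial σ k)} := by
  rw [Ideal.span_singleton_inf_span_singleton_of_prime MvPolynomial.X_prime
    (X_not_dvd_sqMono k (s.notMem_erase y)), sqMono_erase_mul_X k hy]

lemma mem_minimalPrimes_span_sqMono {s : Finset σ} {P : Ideal (MvPolynomial σ k)}
    (hP : P ∈ (Ideal.span {sqMono k s}).minimalPrimes) :
    ∃ i ∈ s, P = Ideal.span {(MvPolynomial.X i : MvPolynomial σ k)} := by
  have : P.IsPrime := hP.1.1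
  obtain ⟨i, hi, hXi⟩ := Ideal.IsPrime.prod_mem_iff.mp (hP.1.2 (Ideal.mem_span_singleton_self _))
  have hle : Ideal.span {(MvPolynomial.X i : MvPolynomial σ k)} ≤ P :=
    Ideal.span_singleton_le_iff_mem P |>.mpr hXi
  have hprime : (Ideal.span {(MvPolynomial.X i : MvPolynomial σ k)}).IsPrime :=
    (Ideal.span_singleton_prime (MvPolynomial.X_ne_zero i)).mpr MvPolynomial.X_prime
  have hdvd : Ideal.span {sqMono k s} ≤ Ideal.span {(MvPolynomial.X i : MvPolynomial σ k)} :=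
    Ideal.span_singleton_le_span_singleton.mpr (Finset.dvd_prod_of_mem _ hi)
  exact ⟨i, hi, le_antisymm (hP.2 ⟨hprime, hdvd⟩ hle) hle⟩

lemma height_span_X_eq (i j : σ) :
    (Ideal.span {(MvPolynomial.X i : MvPolynomial σ k)}).height =
      (Ideal.span {(MvPolynomial.X j : MvPolynomial σ k)}).height := by
  rw [← RingEquiv.height_map (MvPolynomial.renameEquiv k (Equiv.swap i j)).toRingEquiv,
    Ideal.map_span, Set.image_singleton]
  simp

lemma unmixedIdeal_span_sqMono (s : Finset σ) : UnmixedIdeal (Ideal.span {sqMono k s}) := by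
  intro P Q hP hQ
  obtain ⟨i, -, rfl⟩ := mem_minimalPrimes_span_sqMono k hP
  obtain ⟨j, -, rfl⟩ := mem_minimalPrimes_span_sqMono k hQ
  rw [primeHt_eq_height, primeHt_eq_height, height_span_X_eq]

lemma sqSpan_empty : sqSpan k (∅ : Set (Finset σ)) = ⊥ := by
  simp [sqSpan]

lemma sqSpan_singleton (s : Finset σ) :
    sqSpan k ({s} : Set (Finset σ)) = Ideal.span {sqMono k s} := by
  simp [sqSpan, eq_comm]

lemma isGVD_bot : IsGVD k σ ⊥ :=
  IsGVD.base σ ⊥ (UnmixedIdeal.of_isPrime Ideal.isPrime_bot) (Or.inr ⟨∅, by simp⟩)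

theorem isGVD_span_sqMono (s : Finset σ) : IsGVD k σ (Ideal.span {sqMono k s}) := by
  induction hn : s.card generalizing σ s with
  | zero =>
    rw [Finset.card_eq_zero.mp hn]
    refine IsGVD.base σ _ (unmixedIdeal_span_sqMono k ∅) (Or.inl ?_)
    rw [sqMono_empty, Ideal.span_singleton_one]
  | succ n ih =>
    obtain ⟨y, hy⟩ := Finset.card_pos.mp (hn ▸ n.succ_pos : 0 < s.card)
    refine IsGVD.step σ _ (unmixedIdeal_span_sqMono k s) {s} (sqSpan_singleton k s).symm y
      ?_ ?_ ?_
    · rw [NFam_singleton_of_mem hy, CFam_singleton, sqSpan_empty, sqSpan_singleton,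
        bot_sup_eq, span_sqMono_eq_inf k hy]
    · rw [CFam_singleton, Set.image_singleton, sqSpan_singleton]
      apply ih
      rw [card_dropVar_of_notMem (s.notMem_erase y), Finset.card_erase_of_mem hy, hn,
        Nat.add_sub_cancel]
    · rw [NFam_singleton_of_mem hy, Set.image_empty, sqSpan_empty]
      exact isGVD_bot k

end SquarefreeMonomial

theorem principal_sqMono_isGVD_general (k : Type) [Field k] (n : ℕ) (s : Finset (Fin n)) :
    IsGVD k (Fin n) (Ideal.span {sqMono k s}) :=
  isGVD_span_sqMono k s

/-- **Lemma**: the principal ideal generated by a squarefree monomial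
`m = x_{i₁} ⋯ x_{iₜ}` (a product of a nonempty set of distinct variables) in
`k[x_1, …, x_n]` is geometrically vertex decomposable. -/
theorem principal_sqMono_isGVD (k : Type) [Field k] (n : ℕ) (s : Finset (Fin n))
    (hs : s.Nonempty) :
    IsGVD k (Fin n) (Ideal.span {sqMono k s}) :=
  principal_sqMono_isGVD_general k n s
end

section
/- Let T be a finite TD-unmixed balanced tree of height 3, and let r be a vertex of height 3. Then V_odd(T∖{r}) = V_odd(T)∖{r}, where heights on the left are computed in the induced subgraph T∖{r} and on the right in T. -/
open scoped Classical

section GraphDefs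

variable {V : Type} (G : SimpleGraph V)

/-- A leaf is a vertex of degree 1. -/
def IsLeafVx (v : V) : Prop := (G.neighborSet v).ncard = 1

/-- The height of a vertex: the minimum distance to a leaf in its connected
component (`0` if there is no leaf reachable from it, e.g. for isolated vertices). -/
noncomputable def heightVx (v : V) : ℕ :=
  sInf {n | ∃ l, IsLeafVx G l ∧ G.Reachable v l ∧ G.dist v l = n}

/-- The height of a graph: the maximum height of a vertex. -/
noncomputable def heightGr : ℕ := sSup (Set.range (heightVx G))

/-- A graph is balanced if no two adjacent vertices have the same height. -/
def IsBalanced : Prop := ∀ u w, G.Adj u w → heightVx G u ≠ heightVx G w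

/-- The open neighborhood of a set of vertices. -/
def nbhd (S : Set V) : Set V := {u | ∃ v ∈ S, G.Adj v u}

/-- A total dominating set: `N(S) = V`. -/
def IsTDSet (S : Set V) : Prop := nbhd G S = Set.univ

/-- A minimal total dominating set. -/
def IsMinTDSet (S : Set V) : Prop := IsTDSet G S ∧ ∀ S' ⊂ S, ¬ IsTDSet G S'

/-- A graph is TD-unmixed if all of its minimal total dominating sets have
the same cardinality. -/
def TDUnmixed : Prop :=
  ∀ S₁ S₂ : Set V, IsMinTDSet G S₁ → IsMinTDSet G S₂ → S₁.ncard = S₂.ncard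

/-- A forest is TD-unmixed if every connected component is TD-unmixed. -/
def ComponentwiseTDUnmixed : Prop :=
  ∀ c : G.ConnectedComponent, TDUnmixed (G.induce c.supp)

end GraphDefs

/-!
In a connected balanced graph adjacent heights differ by exactly one, so the parity of the height
is a proper 2-colouring. Let `r` have odd, maximal height greater than one. A shortest walk from
`v ≠ r` to a leaf only meets vertices of smaller height, so it avoids `r`, and its endpoint stays a
leaf of `T ∖ {r}`. Hence the height of `v` in `T ∖ {r}` is the length of a walk to a leaf of
`T ∖ {r}`, which is either a leaf of `T` or a neighbour of `r`; both have even height in `T`, and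
the parity colouring along that walk gives the claim.
-/

open SimpleGraph

section Height

variable {V : Type} {G : SimpleGraph V}

lemma heightVx_le_dist {v l : V} (hl : IsLeafVx G l) (hvl : G.Reachable v l) :
    heightVx G v ≤ G.dist v l :=
  Nat.sInf_le ⟨l, hl, hvl, rfl⟩

lemma heightVx_eq_zero_of_isLeafVx {l : V} (hl : IsLeafVx G l) : heightVx G l = 0 := by
  simpa using heightVx_le_dist hl (Reachable.refl l)

lemma exists_isLeafVx_dist_eq_heightVx {v l : V} (hl : IsLeafVx G l) (hvl : G.Reachable v l) :
    ∃ l', IsLeafVx G l' ∧ G.Reachable v l' ∧ G.dist v l' = heightVx G v := by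
  have : {n | ∃ l, IsLeafVx G l ∧ G.Reachable v l ∧ G.dist v l = n}.Nonempty :=
    ⟨_, l, hl, hvl, rfl⟩
  exact Nat.sInf_mem this

lemma exists_isLeafVx_of_heightVx_ne_zero {v : V} (hv : heightVx G v ≠ 0) : ∃ l, IsLeafVx G l := by
  by_contra! hno
  exact hv (by simp [heightVx, hno])

lemma heightVx_le_heightGr {v : V} (hG : heightGr G ≠ 0) : heightVx G v ≤ heightGr G := by
  have hbdd : BddAbove (Set.range (heightVx G)) := by
    by_contra hbdd
    exact hG (by rw [heightGr, csSup_of_not_bddAbove hbdd, csSup_empty]; rfl)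
  exact le_csSup hbdd ⟨v, rfl⟩

lemma heightVx_le_heightVx_add_one_of_adj {u w l : V} (huw : G.Adj u w) (hl : IsLeafVx G l)
    (hwl : G.Reachable w l) : heightVx G u ≤ heightVx G w + 1 := by
  obtain ⟨l', hl', hwl', hdist⟩ := exists_isLeafVx_dist_eq_heightVx hl hwl
  obtain ⟨p, hp⟩ := hwl'.exists_walk_length_eq_dist
  calc heightVx G u ≤ G.dist u l' := heightVx_le_dist hl' ⟨p.cons huw⟩
    _ ≤ (p.cons huw).length := dist_le _
    _ = heightVx G w + 1 := by rw [Walk.length_cons, hp, hdist]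

lemma heightVx_lt_of_mem_support {v l r : V} (hl : IsLeafVx G l) {p : G.Walk v l}
    (hp : p.length = heightVx G v) (hr : r ∈ p.support) (hrv : r ≠ v) :
    heightVx G r < heightVx G v :=
  calc heightVx G r ≤ G.dist r l := heightVx_le_dist hl ⟨p.dropUntil r hr⟩
    _ ≤ (p.dropUntil r hr).length := dist_le _
    _ < heightVx G v := hp ▸ Walk.length_dropUntil_lt_length hr hrv

lemma IsBalanced.even_length_iff (hbal : IsBalanced G) (hG : G.Preconnected) {l : V}
    (hl : IsLeafVx G l) {u w : V} (p : G.Walk u w) :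
    Even p.length ↔ (Even (heightVx G u) ↔ Even (heightVx G w)) := by
  let c : G.Coloring Bool := Coloring.mk (fun v ↦ decide (Even (heightVx G v))) fun {x y} hxy ↦ by
    have := heightVx_le_heightVx_add_one_of_adj hxy hl (hG y l)
    have := heightVx_le_heightVx_add_one_of_adj hxy.symm hl (hG x l)
    have := hbal x y hxy
    simp only [ne_eq, decide_eq_decide]
    grind
  exact (c.even_length_iff_congr p).trans (by simp [c, Coloring.mk])

lemma isLeafVx_induce_iff {s : Set V} (v : s) :
    IsLeafVx (G.induce s) v ↔ (G.neighborSet v ∩ s).ncard = 1 := by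
  have : Subtype.val '' (G.induce s).neighborSet v = G.neighborSet v ∩ s := by
    ext x
    exact ⟨fun ⟨y, hy, hyx⟩ ↦ hyx ▸ ⟨hy, y.2⟩, fun ⟨hx, hxs⟩ ↦ ⟨⟨x, hxs⟩, hx, rfl⟩⟩
  rw [IsLeafVx, ← this, Set.ncard_image_of_injective _ Subtype.val_injective]

lemma isLeafVx_induce_ne_iff {v r : V} (hv : v ≠ r) (hvr : ¬ G.Adj v r) :
    IsLeafVx (G.induce {x | x ≠ r}) ⟨v, hv⟩ ↔ IsLeafVx G v := by
  have : G.neighborSet v ∩ {x | x ≠ r} = G.neighborSet v :=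
    Set.inter_eq_left.mpr fun x hx (hxr : x = r) ↦ hvr (hxr ▸ hx)
  rw [isLeafVx_induce_iff, this, IsLeafVx]

lemma exists_isLeafVx_induce_reachable (hG : G.Preconnected) {r : V} (hr : 1 < heightVx G r)
    (hmax : ∀ v, heightVx G v ≤ heightVx G r) (v : {x | x ≠ r}) :
    ∃ l, IsLeafVx (G.induce {x | x ≠ r}) l ∧ (G.induce {x | x ≠ r}).Reachable v l := by
  obtain ⟨l₀, hl₀⟩ := exists_isLeafVx_of_heightVx_ne_zero (by omega : heightVx G r ≠ 0)
  obtain ⟨l, hl, hvl, hdist⟩ := exists_isLeafVx_dist_eq_heightVx hl₀ (hG v l₀)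
  obtain ⟨p, hp⟩ := hvl.exists_walk_length_eq_dist
  have hp_r : ∀ x ∈ p.support, x ∈ {x | x ≠ r} := fun x hx (hxr : x = r) ↦ by
    subst hxr
    exact (heightVx_lt_of_mem_support hl (hp.trans hdist) hx (Ne.symm v.2)).not_ge (hmax v)
  have hlr : ¬ G.Adj l r := fun hlr ↦ by
    have := heightVx_le_heightVx_add_one_of_adj hlr.symm hl (Reachable.refl l)
    rw [heightVx_eq_zero_of_isLeafVx hl] at this
    omega
  exact ⟨_, (isLeafVx_induce_ne_iff (hp_r l p.end_mem_support) hlr).mpr hl, ⟨p.induce _ hp_r⟩⟩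

lemma even_heightVx_of_isLeafVx_induce (hG : G.Preconnected) (hbal : IsBalanced G) {r : V}
    (hr : Odd (heightVx G r)) {l : {x | x ≠ r}} (hl : IsLeafVx (G.induce {x | x ≠ r}) l) :
    Even (heightVx G l) := by
  by_cases hlr : G.Adj l r
  · obtain ⟨g, hg⟩ := exists_isLeafVx_of_heightVx_ne_zero hr.pos.ne'
    have := hbal.even_length_iff hG hg hlr.toWalk
    simp only [Adj.toWalk, Walk.length_cons, Walk.length_nil, zero_add, Nat.not_even_one,
      false_iff] at this
    have := Nat.not_even_iff_odd.mpr hr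
    tauto
  · rw [heightVx_eq_zero_of_isLeafVx ((isLeafVx_induce_ne_iff l.2 hlr).mp hl)]
    exact Even.zero

lemma odd_heightVx_induce_ne_iff (hG : G.Preconnected) (hbal : IsBalanced G) {r : V}
    (hr : Odd (heightVx G r)) (hr1 : 1 < heightVx G r) (hmax : ∀ v, heightVx G v ≤ heightVx G r)
    (v : {x | x ≠ r}) :
    Odd (heightVx (G.induce {x | x ≠ r}) v) ↔ Odd (heightVx G v) := by
  obtain ⟨l₀, hl₀, hvl₀⟩ := exists_isLeafVx_induce_reachable hG hr1 hmax v
  obtain ⟨l, hl, hvl, hdist⟩ := exists_isLeafVx_dist_eq_heightVx hl₀ hvl₀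
  obtain ⟨p, hp⟩ := hvl.exists_walk_length_eq_dist
  obtain ⟨g, hg⟩ := exists_isLeafVx_of_heightVx_ne_zero hr.pos.ne'
  have hpar := hbal.even_length_iff hG hg (p.map (Embedding.induce _).toHom)
  rw [Walk.length_map, hp, hdist] at hpar
  have hl_even := even_heightVx_of_isLeafVx_induce hG hbal hr hl
  simp only [← Nat.not_even_iff_odd]
  tauto

end Height

theorem oddVertices_delete_height_three_vertex_general {V : Type} (G : SimpleGraph V)
    (htree : G.IsTree) (hbal : IsBalanced G)
    (hht : heightGr G = 3) (r : V) (hr : heightVx G r = 3) :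
    Subtype.val '' {v : {x : V // x ≠ r} | Odd (heightVx (G.induce {x | x ≠ r}) v)}
      = {v : V | Odd (heightVx G v)} \ {r} := by
  have hmax (v : V) : heightVx G v ≤ heightVx G r :=
    hr ▸ hht ▸ heightVx_le_heightGr (by omega)
  have hpar := odd_heightVx_induce_ne_iff htree.connected.preconnected hbal (r := r)
    (by rw [hr]; decide) (by omega) hmax
  ext x
  simp only [Set.mem_image, Set.mem_ofPred_eq, Set.mem_sdiff, Set.mem_singleton_iff]
  constructor
  · rintro ⟨y, hy, rfl⟩
    exact ⟨(hpar y).mp hy, y.2⟩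
  · rintro ⟨hx, hxr⟩
    exact ⟨⟨x, hxr⟩, (hpar ⟨x, hxr⟩).mpr hx, rfl⟩

/-- **Corollary**: if `T` is a finite TD-unmixed balanced tree of height 3 and `r` is a
vertex of height 3, then `V_odd(T∖{r}) = V_odd(T)∖{r}`, heights on the left being
computed in the induced subgraph `T∖{r}` and on the right in `T`. -/
theorem oddVertices_delete_height_three_vertex {V : Type} [Fintype V] (G : SimpleGraph V)
    (htree : G.IsTree) (hbal : IsBalanced G) (hunm : TDUnmixed G)
    (hht : heightGr G = 3) (r : V) (hr : heightVx G r = 3) :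
    Subtype.val '' {v : {x : V // x ≠ r} | Odd (heightVx (G.induce {x | x ≠ r}) v)}
      = {v : V | Odd (heightVx G v)} \ {r} :=
  oddVertices_delete_height_three_vertex_general G htree hbal hht r hr
end

section
/- Let G=(V,E) be a finite simple graph, k a field, and R = k[x_v : v∈V]. Then the open neighborhood ideal satisfies N(G) = ⋂_{S ∈ TD(G)} ⟨x_v : v∈S⟩ = ⋂_{S ∈ MTD(G)} ⟨x_v : v∈S⟩, where TD(G) is the set of all TD-sets of G and MTD(G) is the set of all minimal TD-sets of G; moreover the second intersection is irredundant (omitting any minimal TD-set changes the intersection). -/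
open scoped Classical

section MonomialDefs

/-- The squarefree monomial `X_S = ∏_{v ∈ S} x_v` with support the (finite) set `S`
(`X_∅ = 1`; junk value `1` for infinite `S`). -/
noncomputable def XS (k : Type) [Field k] {σ : Type} (S : Set σ) : MvPolynomial σ k :=
  ∏ᶠ v ∈ S, MvPolynomial.X v

/-- The open neighborhood ideal of a graph `G`: generated by the monomials `X_{N(v)}`
for all vertices `v`. -/
noncomputable def ONIset (k : Type) [Field k] {V : Type} (G : SimpleGraph V) :
    Ideal (MvPolynomial V k) :=
  Ideal.span {m | ∃ v : V, m = XS k (G.neighborSet v)}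

end MonomialDefs

/-!
A squarefree monomial ideal `⟨X_{A_i}⟩` is the intersection of the prime ideals `⟨x_v : v ∈ S⟩`
over the transversals `S` of the sets `A_i`: a monomial `x^d` avoids `⟨x_v : v ∈ S⟩` exactly when
`S` misses the support of `d`, and the complement of that support is a transversal precisely when
no `A_i` lies inside the support. The transversals of the open neighbourhoods are the TD-sets.
Every TD-set contains a minimal one, so the minimal TD-sets suffice, and for a minimal TD-set `S₀`
the monomial `X_{V ∖ S₀}` lies in every other component but not in `⟨x_v : v ∈ S₀⟩`.
-/

open MvPolynomial

section Monomials

variable {σ : Type} {k : Type} [Field k]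

lemma sum_single_one_apply (s : Finset σ) (j : σ) :
    (∑ i ∈ s, Finsupp.single i 1 : σ →₀ ℕ) j = if j ∈ s then 1 else 0 := by
  simp [Finsupp.finsetSum_apply, Finsupp.single_apply]

lemma sum_single_one_le_iff (s : Finset σ) (d : σ →₀ ℕ) :
    ∑ i ∈ s, Finsupp.single i 1 ≤ d ↔ ↑s ⊆ (d.support : Set σ) := by
  simp only [Finsupp.le_def, sum_single_one_apply, Set.subset_def, Finset.mem_coe,
    Finsupp.mem_support_iff]
  refine forall_congr' fun j => ?_
  split_ifs with hj <;> simp [hj, Nat.one_le_iff_ne_zero]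

lemma XS_coe_finset (s : Finset σ) :
    XS k (s : Set σ) = monomial (∑ i ∈ s, Finsupp.single i 1) 1 := by
  rw [XS, finprod_mem_coe_finset, monomial_sum_one]
  rfl

lemma XS_eq_monomial {T : Set σ} (hT : T.Finite) :
    XS k T = monomial (∑ i ∈ hT.toFinset, Finsupp.single i 1) 1 := by
  rw [← XS_coe_finset, hT.coe_toFinset]

lemma XS_mem_span_X_image_iff {S T : Set σ} (hT : T.Finite) :
    XS k T ∈ Ideal.span (X '' S) ↔ (S ∩ T).Nonempty := by
  rw [XS_eq_monomial hT, mem_ideal_span_X_image, support_monomial, if_neg one_ne_zero]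
  simp [sum_single_one_apply, Set.Nonempty]

lemma mem_span_range_XS_iff {ι : Type*} {A : ι → Set σ} (hA : ∀ i, (A i).Finite)
    {f : MvPolynomial σ k} :
    f ∈ Ideal.span (Set.range fun i => XS k (A i)) ↔
      ∀ d ∈ f.support, ∃ i, A i ⊆ (d.support : Set σ) := by
  have hrange : (Set.range fun i => XS k (A i)) = (fun e => monomial e (1 : k)) ''
      Set.range fun i => ∑ j ∈ (hA i).toFinset, Finsupp.single j 1 := by
    simp only [← Set.range_comp, Function.comp_def, XS_eq_monomial (hA _)]
  rw [hrange, mem_ideal_span_monomial_image]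
  simp only [Set.exists_range_iff, sum_single_one_le_iff, Set.Finite.coe_toFinset]

theorem span_range_XS_eq_iInf_transversals {ι : Type*} {A : ι → Set σ}
    (hA : ∀ i, (A i).Finite) :
    Ideal.span (Set.range fun i => XS k (A i)) =
      ⨅ (S : Set σ) (_ : ∀ i, (S ∩ A i).Nonempty), Ideal.span (X '' S) := by
  ext f
  simp only [mem_span_range_XS_iff hA, Ideal.mem_iInf, mem_ideal_span_X_image]
  constructor
  · intro hf S hS d hd
    obtain ⟨i, hi⟩ := hf d hd
    obtain ⟨j, hjS, hjA⟩ := hS i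
    exact ⟨j, hjS, Finsupp.mem_support_iff.mp (hi hjA)⟩
  · intro hf d hd
    by_contra! hnot
    have htransversal : ∀ i, ((d.support : Set σ)ᶜ ∩ A i).Nonempty := fun i => by
      simpa [Set.Nonempty, Set.not_subset, and_comm] using hnot i
    obtain ⟨j, hj, hdj⟩ := hf _ htransversal d hd
    exact hj (Finsupp.mem_support_iff.mpr hdj)

lemma not_iInf_span_X_image_le [Finite σ] {Q : Set σ → Prop} {S₀ : Set σ}
    (hQ : ∀ S, Q S → ¬ S ⊆ S₀) :
    ¬ (⨅ (S : Set σ) (_ : Q S), Ideal.span (X '' S)) ≤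
      (Ideal.span (X '' S₀) : Ideal (MvPolynomial σ k)) := by
  intro hle
  have hmem : XS k S₀ᶜ ∈ ⨅ (S : Set σ) (_ : Q S), Ideal.span (X '' S) := by
    refine Ideal.mem_iInf.mpr fun S => Ideal.mem_iInf.mpr fun hS => ?_
    rw [XS_mem_span_X_image_iff (Set.toFinite _)]
    exact Set.not_subset.mp (hQ S hS)
  have hmeet := (XS_mem_span_X_image_iff (Set.toFinite _)).mp (hle hmem)
  rw [Set.inter_compl_self] at hmeet
  exact Set.not_nonempty_empty hmeet

end Monomials

lemma iInf_minimal_eq_iInf {β α : Type*} [Preorder β] [WellFoundedLT β] [CompleteLattice α]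
    {P : β → Prop} {g : β → α} (hg : Monotone g) :
    ⨅ (b) (_ : Minimal P b), g b = ⨅ (b) (_ : P b), g b := by
  refine le_antisymm (le_iInf₂ fun b hb => ?_) (le_iInf₂ fun b hb => iInf₂_le b hb.prop)
  obtain ⟨c, hcb, hc⟩ := exists_minimal_le_of_wellFoundedLT P b hb
  exact (iInf₂_le c hc).trans (hg hcb)

section Graph

variable {V : Type} (G : SimpleGraph V)

lemma isTDSet_iff_forall_inter_neighborSet_nonempty (S : Set V) :
    IsTDSet G S ↔ ∀ v, (S ∩ G.neighborSet v).Nonempty := by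
  simp [IsTDSet, nbhd, Set.eq_univ_iff_forall, Set.Nonempty, G.adj_comm]

lemma isMinTDSet_eq_minimal : IsMinTDSet G = Minimal (IsTDSet G) := by
  ext S
  rw [Set.minimal_iff_forall_ssubset, IsMinTDSet]

lemma ONIset_eq_span_range (k : Type) [Field k] :
    ONIset k G = Ideal.span (Set.range fun v => XS k (G.neighborSet v)) := by
  simp only [ONIset, Set.range, eq_comm]

end Graph

/-- **Theorem** (primary decomposition of the open neighborhood ideal): for a finite
simple graph `G`, `N(G) = ⋂_{S ∈ TD(G)} ⟨x_v : v ∈ S⟩ = ⋂_{S ∈ MTD(G)} ⟨x_v : v ∈ S⟩`,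
and the second intersection is irredundant. -/
theorem ONI_primary_decomposition (k : Type) [Field k] {V : Type} [Fintype V]
    (G : SimpleGraph V) :
    ONIset k G = (⨅ (S : Set V) (_ : IsTDSet G S), Ideal.span (MvPolynomial.X '' S)) ∧
    ONIset k G = (⨅ (S : Set V) (_ : IsMinTDSet G S), Ideal.span (MvPolynomial.X '' S)) ∧
    ∀ S₀ : Set V, IsMinTDSet G S₀ →
      (⨅ (S : Set V) (_ : IsMinTDSet G S ∧ S ≠ S₀), Ideal.span (MvPolynomial.X '' S))
        ≠ ONIset k G := by
  have hTD : ONIset k G = ⨅ (S : Set V) (_ : IsTDSet G S), Ideal.span (X '' S) := by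
    simp only [ONIset_eq_span_range, isTDSet_iff_forall_inter_neighborSet_nonempty,
      span_range_XS_eq_iInf_transversals fun v => (G.neighborSet v).toFinite]
  have hMTD : ONIset k G = ⨅ (S : Set V) (_ : IsMinTDSet G S), Ideal.span (X '' S) := by
    rw [hTD, isMinTDSet_eq_minimal,
      iInf_minimal_eq_iInf fun _ _ h => Ideal.span_mono (Set.image_mono h)]
  refine ⟨hTD, hMTD, fun S₀ h₀ heq => ?_⟩
  have hle : (⨅ (S : Set V) (_ : IsMinTDSet G S ∧ S ≠ S₀), Ideal.span (X '' S)) ≤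
      (Ideal.span (X '' S₀) : Ideal (MvPolynomial V k)) := by
    rw [heq, hMTD]
    exact iInf₂_le S₀ h₀
  refine not_iInf_span_X_image_le (fun S hS hsub => hS.2 ?_) hle
  rw [isMinTDSet_eq_minimal] at h₀ hS
  exact h₀.eq_of_le hS.1.prop hsub
end
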